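/- Let G be a connected graph on n ≥ 3 vertices with T(G) = ⌈n/2⌉. Then there exist adjacent vertices u, v ∈ V(G) such that G' = G - {u,v} is connected and T(G') = ⌈(n-2)/2⌉. -/

import Mathlib

open SimpleGraph

/-- A tree cover of `G`: vertex-disjoint induced subtrees covering all vertices. -/
def IsTreeCover {V : Type} (G : SimpleGraph V) (C : Finset (Set V)) : Prop :=
  (∀ s ∈ C, (G.induce s).IsTree) ∧ (∀ v : V, ∃ s ∈ C, v ∈ s) ∧
    (C : Set (Set V)).PairwiseDisjoint id

/-- The tree cover number: minimum cardinality of a tree cover. -/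
noncomputable def treeCoverNumber {V : Type} (G : SimpleGraph V) : ℕ :=
  sInf {n | ∃ C : Finset (Set V), IsTreeCover G C ∧ C.card = n}

/-!
A connected graph `G` on `n` vertices has `T(G) ≤ ⌈n/2⌉`: remove an induced star `K_{1,p}`
(`p ≥ 1`) whose complement stays connected, and recurse. Such a star is a deepest vertex that
has children, together with its children, in a layering of `G` (every vertex but the root has a
neighbour one level up) of maximal total depth: maximality forbids edges between the children.

Since `T(G) ≤ T(G - S) + 1` for every induced tree `S`, the equality `T(G) = ⌈n/2⌉` rules out
induced trees on four or more vertices with connected complement. So the star has one leaf,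
which gives the edge `uv`, or two leaves `x, y`. If `x` (say) has a neighbour outside the star,
remove `c` and `y`. Otherwise `x, y` are leaves of `G` at `c`, and induction on `G - {c, x, y}`
gives an edge `uv` there whose removal keeps it connected; then `G - {u, v}` is connected unless
all neighbours of `c` outside `{c, x, y}` lie in `{u, v}`, and in that case an induced tree on
four or five vertices with connected complement appears. Finally `T(G - {u, v}) ≤ ⌈(n-2)/2⌉`
by the bound, and `T(G) ≤ T(G - {u, v}) + 1` gives the reverse inequality.
-/

lemma compl_insert_eq_diff {α : Type*} (s : Set α) (a : α) : (insert a s)ᶜ = sᶜ \ {a} := by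
  ext; simp [and_comm]

namespace SimpleGraph

variable {V : Type} {G : SimpleGraph V}

def induceInduceIso (G : SimpleGraph V) (A : Set V) (B : Set A) :
    (G.induce A).induce B ≃g G.induce (Subtype.val '' B) where
  toFun x := ⟨x.1.1, x.1, x.2, rfl⟩
  invFun y := ⟨⟨y.1, by obtain ⟨a, -, ha⟩ := y.2; exact ha ▸ a.2⟩, by
    obtain ⟨a, ha, he⟩ := y.2
    rwa [show (⟨y.1, _⟩ : A) = a from Subtype.ext he.symm]⟩
  left_inv _ := rfl
  right_inv _ := rfl
  map_rel_iff' := Iff.rfl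

lemma preconnected_induce_insert {s : Set V} (hs : (G.induce s).Preconnected) {v w : V}
    (hw : w ∈ s) (hvw : G.Adj v w) : (G.induce (insert v s)).Preconnected := by
  have := G.connected_induce_union (s := {v}) Preconnected.of_subsingleton hs rfl hw hvw
  rw [Set.singleton_union] at this
  exact this.preconnected

lemma isTree_induce_insert_of_isIndepSet {c : V} {L : Set V} (hc : ∀ x ∈ L, G.Adj c x)
    (hL : G.IsIndepSet L) : (G.induce (insert c L)).IsTree := by
  have : G.induce (insert c L) = starGraph ⟨c, Set.mem_insert c L⟩ := by
    ext ⟨a, ha⟩ ⟨b, hb⟩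
    simp only [comap_adj, Function.Embedding.coe_subtype, starGraph_adj, ne_eq, Subtype.mk.injEq]
    constructor
    · intro hab
      refine ⟨hab.ne, ?_⟩
      by_contra! h
      exact hL (ha.resolve_left h.1) (hb.resolve_left h.2) hab.ne hab
    · rintro ⟨hne, rfl | rfl⟩
      · exact hc b (hb.resolve_left (Ne.symm hne))
      · exact (hc a (ha.resolve_left hne)).symm
  exact this ▸ isTree_starGraph _

def IsLayering (G : SimpleGraph V) (r : V) (d : V → ℕ) : Prop :=
  d r = 0 ∧ ∀ v, v ≠ r → ∃ w, G.Adj v w ∧ d v = d w + 1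

namespace IsLayering

variable {r : V} {d : V → ℕ}

lemma exists_eq_of_le (h : IsLayering G r d) {v : V} {k : ℕ} (hk : k ≤ d v) :
    ∃ u, d u = k := by
  induction hn : d v - k generalizing v with
  | zero => exact ⟨v, by omega⟩
  | succ n ih =>
    have hvr : v ≠ r := fun hvr ↦ by rw [hvr, h.1] at hn; omega
    obtain ⟨w, -, hw⟩ := h.2 v hvr
    exact ih (v := w) (by omega) (by omega)

lemma lt_card [Fintype V] (h : IsLayering G r d) (v : V) : d v < Fintype.card V := by
  classical
  have : Finset.range (d v + 1) ⊆ Finset.univ.image d := fun k hk ↦ by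
    obtain ⟨u, hu⟩ := h.exists_eq_of_le (Nat.lt_succ_iff.mp (Finset.mem_range.mp hk))
    exact Finset.mem_image.mpr ⟨u, Finset.mem_univ u, hu⟩
  have := (Finset.card_le_card this).trans Finset.card_image_le
  simpa using this

lemma update_of_adj_of_forall_ne [DecidableEq V] (h : IsLayering G r d) {x y : V}
    (hyx : G.Adj y x) (hyr : y ≠ r)
    (hleaf : ∀ w, G.Adj y w → d w ≠ d y + 1) :
    IsLayering G r (Function.update d y (d x + 1)) := by
  refine ⟨by rw [Function.update_of_ne hyr.symm, h.1], fun v hvr ↦ ?_⟩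
  by_cases hvy : v = y
  · subst hvy
    exact ⟨x, hyx, by rw [Function.update_self, Function.update_of_ne hyx.ne.symm]⟩
  · obtain ⟨w, hvw, hw⟩ := h.2 v hvr
    have hwy : w ≠ y := by rintro rfl; exact hleaf v hvw.symm hw
    exact ⟨w, hvw, by rw [Function.update_of_ne hvy, Function.update_of_ne hwy, hw]⟩

lemma preconnected_induce (h : IsLayering G r d) {s : Set V}
    (hs : ∀ w ∈ s, w ≠ r → ∃ p ∈ s, G.Adj w p ∧ d w = d p + 1) :
    (G.induce s).Preconnected := by
  have hreach : ∀ w (hw : w ∈ s), ∃ hr : r ∈ s,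
      (G.induce s).Reachable ⟨w, hw⟩ ⟨r, hr⟩ := by
    intro w hw
    induction hn : d w using Nat.strong_induction_on generalizing w with
    | _ n ih =>
      by_cases hwr : w = r
      · subst hwr; exact ⟨hw, .rfl⟩
      obtain ⟨p, hp, hwp, hdp⟩ := hs w hw hwr
      obtain ⟨hr, hpr⟩ := ih (d p) (by omega) p hp rfl
      exact ⟨hr, (show (G.induce s).Adj ⟨w, hw⟩ ⟨p, hp⟩ from hwp).reachable.trans hpr⟩
  rintro ⟨a, ha⟩ ⟨b, hb⟩
  obtain ⟨hr, har⟩ := hreach a ha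
  exact har.trans (hreach b hb).2.symm

end IsLayering

lemma Connected.isLayering_dist (hG : G.Connected) (r : V) : G.IsLayering r (G.dist r) := by
  refine ⟨dist_self, fun v hvr ↦ ?_⟩
  obtain ⟨p, hp⟩ := hG.exists_walk_length_eq_dist v r
  cases p with
  | nil => exact absurd rfl hvr
  | @cons _ w _ hvw q =>
    have hq : G.dist r w ≤ q.length := dist_comm (G := G) ▸ dist_le q
    rw [Walk.length_cons, dist_comm] at hp
    refine ⟨w, hvw, ?_⟩
    rcases hvw.symm.diff_dist_adj (u := r) with h | h | h <;> omega

lemma Connected.exists_isLayering_forall_sum_le [Fintype V] (hG : G.Connected) (r : V) :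
    ∃ d, G.IsLayering r d ∧ ∀ d', G.IsLayering r d' → ∑ v, d' v ≤ ∑ v, d v := by
  have hbdd : BddAbove {k | ∃ d, G.IsLayering r d ∧ ∑ v, d v = k} := by
    refine ⟨Fintype.card V * Fintype.card V, ?_⟩
    rintro _ ⟨d, hd, rfl⟩
    calc ∑ v, d v ≤ ∑ _v : V, Fintype.card V :=
          Finset.sum_le_sum fun v _ ↦ (hd.lt_card v).le
      _ = _ := by simp
  obtain ⟨d, hd, hsum⟩ := Nat.sSup_mem (s := {k | ∃ d, G.IsLayering r d ∧ ∑ v, d v = k})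
    ⟨_, _, hG.isLayering_dist r, rfl⟩ hbdd
  exact ⟨d, hd, fun d' hd' ↦ hsum ▸ le_csSup hbdd ⟨d', hd', rfl⟩⟩

theorem Connected.exists_isIndepSet_preconnected_induce_compl [Finite V] [Nontrivial V]
    (hG : G.Connected) :
    ∃ (c : V) (L : Set V), L.Nonempty ∧ (∀ x ∈ L, G.Adj c x) ∧ G.IsIndepSet L ∧
      (G.induce (insert c L)ᶜ).Preconnected := by
  classical
  have := Fintype.ofFinite V
  obtain ⟨r⟩ := hG.nonempty
  obtain ⟨d, hd, hmax⟩ := hG.exists_isLayering_forall_sum_le r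
  -- `c` is a deepest vertex having a child; its children `L` are then leaves
  set P := Finset.univ.filter fun c ↦ ∃ u, G.Adj c u ∧ d u = d c + 1
  have hP : P.Nonempty := by
    obtain ⟨v, hvr⟩ := exists_ne r
    obtain ⟨w, hvw, hw⟩ := hd.2 v hvr
    exact ⟨w, Finset.mem_filter.mpr ⟨Finset.mem_univ w, v, hvw.symm, hw⟩⟩
  obtain ⟨c, hcP, hcmax⟩ := P.exists_max_image d hP
  obtain ⟨u₀, hu₀⟩ := (Finset.mem_filter.mp hcP).2
  set L : Set V := {u | G.Adj c u ∧ d u = d c + 1}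
  have hleaf : ∀ u ∈ L, ∀ w, G.Adj u w → d w ≠ d u + 1 := fun u hu w huw hw ↦ by
    have := hcmax u (Finset.mem_filter.mpr ⟨Finset.mem_univ u, w, huw, hw⟩)
    have := hu.2
    omega
  have hLr : ∀ u ∈ L, u ≠ r := fun u hu hur ↦ by
    have := hu.2
    rw [hur, hd.1] at this
    omega
  refine ⟨c, L, ⟨u₀, hu₀⟩, fun x hx ↦ hx.1, fun x hx y hy hxy hadj ↦ ?_, ?_⟩
  · -- re-hanging the leaf `y` below its sibling `x` would increase the total depth
    have hd' := hd.update_of_adj_of_forall_ne hadj.symm (hLr y hy) (hleaf y hy)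
    have hlt : ∑ v, d v < ∑ v, Function.update d y (d x + 1) v := by
      refine Finset.sum_lt_sum (fun v _ ↦ ?_) ⟨y, Finset.mem_univ y, ?_⟩
      · rcases eq_or_ne v y with rfl | hvy
        · rw [Function.update_self]; have := hx.2; have := hy.2; omega
        · rw [Function.update_of_ne hvy]
      · rw [Function.update_self]; have := hx.2; have := hy.2; omega
    exact (hmax _ hd').not_gt hlt
  · refine hd.preconnected_induce fun w hw hwr ↦ ?_
    obtain ⟨p, hwp, hp⟩ := hd.2 w hwr
    refine ⟨p, ?_, hwp, hp⟩
    rintro (rfl | hpL)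
    · exact hw (Or.inr ⟨hwp.symm, hp⟩)
    · exact hleaf p hpL w hwp.symm hp

lemma isAcyclic_induce_iff {s : Set V} :
    (G.induce s).IsAcyclic ↔
      ∀ u (p : G.Walk u u), p.IsCycle → ∃ x ∈ p.support, x ∉ s := by
  constructor
  · intro hs u p hp
    by_contra! hps
    refine hs (p.induce s hps) ((Walk.isCycle_map_iff_of_injective
      (f := (Embedding.induce s).toHom) Subtype.val_injective).mp ?_)
    rwa [Walk.map_induce p hps]
  · intro h u q hq
    obtain ⟨x, hx, hxs⟩ :=
      h _ _ (hq.map (f := (Embedding.induce s).toHom) Subtype.val_injective)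
    rw [Walk.support_map, List.mem_map] at hx
    obtain ⟨y, -, rfl⟩ := hx
    exact hxs y.2

lemma IsTree.induce_insert {s : Set V} (hs : (G.induce s).IsTree) {v w : V} (hw : w ∈ s)
    (hvw : G.Adj v w) (hv : ∀ a ∈ s, G.Adj v a → a = w) : (G.induce (insert v s)).IsTree := by
  classical
  refine ⟨?_, isAcyclic_induce_iff.mpr fun u p hp ↦ ?_⟩
  · rw [← Set.singleton_union]
    exact G.connected_induce_union Preconnected.of_subsingleton hs.1.preconnected rfl hw hvw
  obtain ⟨x, hx, hxs⟩ := isAcyclic_induce_iff.mp hs.2 u p hp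
  by_cases hxv : x = v
  · subst hxv
    -- a cycle through `x` leaves it along two distinct edges, but `x` has only one neighbour
    by_contra! hps
    set q := p.rotate x hx
    have hq : q.IsCycle := hp.rotate hx
    have hnil : ¬q.Nil := hq.not_nil
    have hmem : ∀ y, G.Adj x y → y ∈ q.support → y = w := fun y hxy hy ↦
      hv y (((hps y ((Walk.mem_support_rotate_iff ..).mp hy))).resolve_left hxy.ne') hxy
    exact hq.snd_ne_penultimate <|
      (hmem _ (q.adj_snd hnil) (q.getVert_mem_support 1)).trans
        (hmem _ (q.adj_penultimate hnil).symm (q.getVert_mem_support _)).symm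
  · exact ⟨x, hx, by simp [hxv, hxs]⟩

end SimpleGraph

variable {V : Type} {G : SimpleGraph V}

lemma IsTreeCover.treeCoverNumber_le_card {C : Finset (Set V)} (hC : IsTreeCover G C) :
    treeCoverNumber G ≤ C.card :=
  Nat.sInf_le ⟨C, hC, rfl⟩

lemma isTreeCover_image_singleton [Fintype V] [DecidableEq V] :
    IsTreeCover G (Finset.univ.image fun v : V ↦ ({v} : Set V)) := by
  refine ⟨?_, fun v ↦ ⟨{v}, by simp, rfl⟩, ?_⟩
  · simp only [Finset.mem_image, Finset.mem_univ, true_and, forall_exists_index,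
      forall_apply_eq_imp_iff]
    exact fun v ↦ IsTree.of_subsingleton
  · simp only [Finset.coe_image, Finset.coe_univ, Set.image_univ]
    rintro _ ⟨v, rfl⟩ _ ⟨w, rfl⟩ hvw
    exact Set.disjoint_singleton.mpr fun h ↦ hvw (h ▸ rfl)

lemma treeCoverNumber_le_card [Finite V] : treeCoverNumber G ≤ Nat.card V := by
  classical
  have := Fintype.ofFinite V
  calc treeCoverNumber G ≤ _ := isTreeCover_image_singleton.treeCoverNumber_le_card
    _ ≤ Nat.card V := Finset.card_image_le.trans (by simp [Nat.card_eq_fintype_card])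

lemma exists_isTreeCover_card_eq [Finite V] :
    ∃ C : Finset (Set V), IsTreeCover G C ∧ C.card = treeCoverNumber G := by
  classical
  have := Fintype.ofFinite V
  exact Nat.sInf_mem (s := {n | ∃ C, IsTreeCover G C ∧ C.card = n})
    ⟨_, _, isTreeCover_image_singleton, rfl⟩

lemma treeCoverNumber_le_add_one_of_isTree_induce [Finite V] {S : Set V}
    (hS : (G.induce S).IsTree) : treeCoverNumber G ≤ treeCoverNumber (G.induce Sᶜ) + 1 := by
  classical
  obtain ⟨C, ⟨hCtree, hCcover, hCdisj⟩, hCcard⟩ :=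
    exists_isTreeCover_card_eq (G := G.induce Sᶜ)
  have hcover : IsTreeCover G (insert S (C.image (Subtype.val '' ·))) := by
    refine ⟨?_, fun v ↦ ?_, ?_⟩
    · simp only [Finset.mem_insert, Finset.mem_image]
      rintro _ (rfl | ⟨t, ht, rfl⟩)
      exacts [hS, (induceInduceIso G _ t).isTree_iff.mp (hCtree t ht)]
    · by_cases hv : v ∈ S
      · exact ⟨S, Finset.mem_insert_self _ _, hv⟩
      · obtain ⟨t, ht, hvt⟩ := hCcover ⟨v, hv⟩
        exact ⟨_, Finset.mem_insert_of_mem (Finset.mem_image_of_mem _ ht), ⟨v, hv⟩, hvt,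
          rfl⟩
    · rw [Finset.coe_insert, Finset.coe_image]
      refine Set.PairwiseDisjoint.insert ?_ ?_
      · rintro _ ⟨t₁, ht₁, rfl⟩ _ ⟨t₂, ht₂, rfl⟩ hne
        exact (Set.disjoint_image_iff Subtype.val_injective).mpr
          (hCdisj ht₁ ht₂ fun h ↦ hne (h ▸ rfl))
      · rintro _ ⟨t, -, rfl⟩ -
        exact Set.disjoint_left.mpr fun v hvS ⟨w, _, hwv⟩ ↦ w.2 (hwv ▸ hvS)
  calc treeCoverNumber G ≤ _ := hcover.treeCoverNumber_le_card
    _ ≤ (C.image (Subtype.val '' ·)).card + 1 := Finset.card_insert_le _ _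
    _ ≤ treeCoverNumber (G.induce Sᶜ) + 1 := by
      rw [← hCcard]; exact Nat.add_le_add_right Finset.card_image_le 1

theorem treeCoverNumber_le_of_preconnected [Finite V] (hG : G.Preconnected) :
    treeCoverNumber G ≤ (Nat.card V + 1) / 2 := by
  induction hn : Nat.card V using Nat.strong_induction_on generalizing V with
  | _ n ih =>
  rcases le_or_gt n 1 with hn1 | hn1
  · have := treeCoverNumber_le_card (G := G)
    omega
  have : Nontrivial V := Finite.one_lt_card_iff_nontrivial.mp (hn ▸ hn1)
  obtain ⟨c, L, ⟨x, hx⟩, hcL, hL, hR⟩ :=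
    (connected_iff G |>.mpr ⟨hG, inferInstance⟩).exists_isIndepSet_preconnected_induce_compl
  have hglue := treeCoverNumber_le_add_one_of_isTree_induce
    (isTree_induce_insert_of_isIndepSet hcL hL)
  have hsize : Nat.card ↥(insert c L)ᶜ + 2 ≤ n := by
    have h2 : ({c, x} : Set V).ncard ≤ (insert c L).ncard :=
      Set.ncard_le_ncard (Set.insert_subset_insert (Set.singleton_subset_iff.mpr hx))
    rw [Set.ncard_pair (hcL x hx).ne] at h2
    have := (insert c L).ncard_add_ncard_compl
    rw [Nat.card_coe_set_eq]
    omega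
  have := ih _ (by omega) hR rfl
  omega

theorem treeCoverNumber_le_of_isTree_induce_of_preconnected [Finite V] {S : Set V}
    (hS : (G.induce S).IsTree)
    (hR : (G.induce Sᶜ).Preconnected) : treeCoverNumber G ≤ (Sᶜ.ncard + 1) / 2 + 1 := by
  have := treeCoverNumber_le_of_preconnected hR
  rw [Nat.card_coe_set_eq] at this
  have := treeCoverNumber_le_add_one_of_isTree_induce hS
  omega

namespace SimpleGraph

lemma preconnected_induce_compl_pair_of_adj {c x y w : V}
    (hR : (G.induce ({c, x, y} : Set V)ᶜ).Preconnected) (hcx : c ≠ x) (hxy : x ≠ y)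
    (hw : w ∈ ({c, x, y} : Set V)ᶜ) (hxw : G.Adj x w) :
    (G.induce ({c, y} : Set V)ᶜ).Preconnected := by
  rw [show ({c, y} : Set V)ᶜ = insert x ({c, x, y} : Set V)ᶜ by
    ext z; by_cases hz : z = x <;> simp_all [hcx.symm]]
  exact preconnected_induce_insert hR hw hxw

structure IsCherry (G : SimpleGraph V) (c x y : V) : Prop where
  adj_left : G.Adj c x
  adj_right : G.Adj c y
  ne : x ≠ y
  eq_of_adj_left : ∀ w, G.Adj x w → w = c
  eq_of_adj_right : ∀ w, G.Adj y w → w = c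

namespace IsCherry

variable {c x y : V}

lemma of_forall_not_adj (hcx : G.Adj c x) (hcy : G.Adj c y) (hxy : x ≠ y) (hnxy : ¬G.Adj x y)
    (hx : ∀ w ∈ ({c, x, y} : Set V)ᶜ, ¬G.Adj x w)
    (hy : ∀ w ∈ ({c, x, y} : Set V)ᶜ, ¬G.Adj y w) :
    G.IsCherry c x y := by
  refine ⟨hcx, hcy, hxy, fun w hxw ↦ ?_, fun w hyw ↦ ?_⟩
  · by_contra hwc
    exact hx w (by simp [hwc, hxw.ne']; rintro rfl; exact hnxy hxw) hxw
  · by_contra hwc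
    exact hy w (by simp [hwc, hyw.ne']; rintro rfl; exact hnxy hyw.symm) hyw

lemma isTree_induce (h : G.IsCherry c x y) : (G.induce {c, x, y}).IsTree :=
  isTree_induce_insert_of_isIndepSet (by simp [h.adj_left, h.adj_right]) <|
    Set.pairwise_pair.mpr fun _ ↦ ⟨fun hxy ↦ h.adj_right.ne (h.eq_of_adj_left y hxy).symm,
      fun hyx ↦ h.adj_right.ne (h.eq_of_adj_left y hyx.symm).symm⟩

lemma ncard_eq_three (h : G.IsCherry c x y) : ({c, x, y} : Set V).ncard = 3 :=
  Set.ncard_eq_three.mpr ⟨c, x, y, h.adj_left.ne, h.adj_right.ne, h.ne, rfl⟩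

lemma eq_of_adj_of_mem_compl (h : G.IsCherry c x y) {a w : V} (ha : a ∈ ({c, x, y} : Set V))
    (hw : w ∈ ({c, x, y} : Set V)ᶜ) (haw : G.Adj a w) : a = c := by
  rcases ha with rfl | rfl | rfl
  · rfl
  · exact absurd (h.eq_of_adj_left w haw) (by rintro rfl; exact hw (by simp))
  · exact absurd (h.eq_of_adj_right w haw) (by rintro rfl; exact hw (by simp))

lemma isTree_induce_insert (h : G.IsCherry c x y) {u : V} (hu : u ∈ ({c, x, y} : Set V)ᶜ)
    (hcu : G.Adj c u) : (G.induce (insert u {c, x, y})).IsTree :=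
  h.isTree_induce.induce_insert (by simp) hcu.symm fun _ ha hua ↦
    h.eq_of_adj_of_mem_compl ha hu hua.symm

lemma not_preconnected_induce_diff_singleton [Finite V]
    (hT : (Nat.card V + 1) / 2 ≤ treeCoverNumber G) (h : G.IsCherry c x y) {u : V}
    (hu : u ∈ ({c, x, y} : Set V)ᶜ) (hcu : G.Adj c u) :
    ¬(G.induce (({c, x, y} : Set V)ᶜ \ {u})).Preconnected := by
  intro hR
  have hQ := treeCoverNumber_le_of_isTree_induce_of_preconnected (h.isTree_induce_insert hu hcu)
    (by rwa [compl_insert_eq_diff])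
  have := Set.ncard_add_ncard_compl (insert u {c, x, y})
  rw [Set.ncard_insert_of_notMem hu, h.ncard_eq_three] at this
  omega

lemma nonempty_and_not_adj_of_preconnected_induce_diff_pair [Finite V]
    (hT : (Nat.card V + 1) / 2 ≤ treeCoverNumber G) (h : G.IsCherry c x y) {u v : V}
    (hu : u ∈ ({c, x, y} : Set V)ᶜ) (hv : v ∈ ({c, x, y} : Set V)ᶜ) (huv : u ≠ v)
    (hcu : G.Adj c u) (hR : (G.induce (({c, x, y} : Set V)ᶜ \ {u, v})).Preconnected) :
    (({c, x, y} : Set V)ᶜ \ {u, v}).Nonempty ∧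
      ∀ w ∈ ({c, x, y} : Set V)ᶜ \ {u, v}, ¬G.Adj v w := by
  have hu' := h.not_preconnected_induce_diff_singleton hT hu hcu
  rw [show ({c, x, y} : Set V)ᶜ \ {u} = insert v (({c, x, y} : Set V)ᶜ \ {u, v}) by
    ext w; by_cases hw : w = v <;> simp_all [eq_comm]] at hu'
  refine ⟨Set.nonempty_iff_ne_empty.mpr fun hemp ↦ ?_, fun w hw hvw ↦ ?_⟩
  · rw [hemp, insert_empty_eq] at hu'
    exact hu' Preconnected.of_subsingleton
  · exact hu' (preconnected_induce_insert hR hw hvw)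

lemma exists_adj_mem_diff_pair [Finite V] (hG : G.Connected)
    (hT : (Nat.card V + 1) / 2 ≤ treeCoverNumber G) (h : G.IsCherry c x y) {u v : V}
    (hu : u ∈ ({c, x, y} : Set V)ᶜ) (hv : v ∈ ({c, x, y} : Set V)ᶜ) (huv : G.Adj u v)
    (hcu : G.Adj c u) (hR : (G.induce (({c, x, y} : Set V)ᶜ \ {u, v})).Preconnected) :
    ∃ w ∈ ({c, x, y} : Set V)ᶜ \ {u, v}, G.Adj c w := by
  by_contra! hc
  obtain ⟨⟨w, hw⟩, hv'⟩ :=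
    h.nonempty_and_not_adj_of_preconnected_induce_diff_pair hT hu hv huv.ne hcu hR
  by_cases hcv : G.Adj c v
  · -- by symmetry `u` has no neighbour in `{c, x, y}ᶜ \ {u, v}` either, so no edge enters it
    have hu' := (h.nonempty_and_not_adj_of_preconnected_induce_diff_pair hT hv hu huv.ne.symm hcv
      (by rwa [Set.pair_comm v u])).2
    rw [Set.pair_comm v u] at hu'
    obtain ⟨d, -, hd₁, hd₂⟩ := (hG.preconnected c w).some.exists_boundary_dart
      (({c, x, y} : Set V)ᶜ \ {u, v})ᶜ (fun hc ↦ hc.1 (by simp)) (not_not.mpr hw)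
    rw [Set.mem_compl_iff, not_not] at hd₂
    by_cases ha : d.fst ∈ ({c, x, y} : Set V)
    · exact hc _ hd₂ (h.eq_of_adj_of_mem_compl ha hd₂.1 d.adj ▸ d.adj)
    · obtain rfl | rfl : d.fst = u ∨ d.fst = v := by
        simp only [Set.mem_compl_iff, Set.mem_sdiff, ha, not_false_eq_true, true_and,
          not_not] at hd₁
        exact hd₁
      exacts [hu' _ hd₂ d.adj, hv' _ hd₂ d.adj]
  · -- otherwise `v` is a leaf at `u`, and `{c, x, y, u, v}` is an induced tree
    have hS := (h.isTree_induce_insert hu hcu).induce_insert (v := v) (by simp) huv.symm ?_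
    · have hQ := treeCoverNumber_le_of_isTree_induce_of_preconnected hS <| by
        rwa [compl_insert_eq_diff, compl_insert_eq_diff, Set.sdiff_sdiff, Set.singleton_union]
      have := Set.ncard_add_ncard_compl (insert v (insert u {c, x, y}))
      rw [Set.ncard_insert_of_notMem fun hv' ↦ hv'.elim huv.ne.symm hv,
        Set.ncard_insert_of_notMem hu, h.ncard_eq_three] at this
      omega
    · rintro a (rfl | ha) hva
      · rfl
      · exact absurd (h.eq_of_adj_of_mem_compl ha hv hva.symm ▸ hva.symm) hcv

lemma exists_adj_preconnected_induce_compl_pair [Finite V] (hG : G.Connected)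
    (hT : (Nat.card V + 1) / 2 ≤ treeCoverNumber G) (h : G.IsCherry c x y)
    (hR : (G.induce ({c, x, y} : Set V)ᶜ).Preconnected)
    (hpair : 2 ≤ ({c, x, y} : Set V)ᶜ.ncard → ∃ u ∈ ({c, x, y} : Set V)ᶜ,
      ∃ v ∈ ({c, x, y} : Set V)ᶜ, G.Adj u v ∧
        (G.induce (({c, x, y} : Set V)ᶜ \ {u, v})).Preconnected) :
    ∃ u v, G.Adj u v ∧ (G.induce ({u, v}ᶜ : Set V)).Preconnected := by
  obtain ⟨r, hr⟩ : ({c, x, y} : Set V)ᶜ.Nonempty := by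
    by_contra! hemp
    have := treeCoverNumber_le_of_isTree_induce_of_preconnected h.isTree_induce hR
    have := Set.ncard_add_ncard_compl ({c, x, y} : Set V)
    rw [hemp, Set.ncard_empty, h.ncard_eq_three] at *
    omega
  obtain ⟨w₀, hw₀, hcw₀⟩ : ∃ w ∈ ({c, x, y} : Set V)ᶜ, G.Adj c w := by
    obtain ⟨d, -, hd₁, hd₂⟩ :=
      (hG.preconnected c r).some.exists_boundary_dart {c, x, y} (by simp) hr
    exact ⟨d.snd, hd₂, h.eq_of_adj_of_mem_compl hd₁ hd₂ d.adj ▸ d.adj⟩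
  rcases lt_or_ge ({c, x, y} : Set V)ᶜ.ncard 2 with hsmall | hlarge
  · have hsub : (({c, x, y} : Set V)ᶜ \ {w₀}).Subsingleton :=
      (Set.ncard_le_one_iff_subsingleton.mp (by omega)).anti Set.sdiff_subset
    have := hsub.coe_sort
    exact absurd Preconnected.of_subsingleton
      (h.not_preconnected_induce_diff_singleton hT hw₀ hcw₀)
  obtain ⟨u, hu, v, hv, huv, hR'⟩ := hpair hlarge
  by_cases hc : ∃ w ∈ ({c, x, y} : Set V)ᶜ \ {u, v}, G.Adj c w
  · obtain ⟨w, hw, hcw⟩ := hc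
    refine ⟨u, v, huv, ?_⟩
    have := G.connected_induce_union h.isTree_induce.1.preconnected hR' (by simp) hw hcw
    rw [show {c, x, y} ∪ ({c, x, y} : Set V)ᶜ \ {u, v} = {u, v}ᶜ by
      ext z; simp only [Set.mem_compl_iff, Set.mem_insert_iff, Set.mem_singleton_iff] at hu hv
      by_cases hz : z ∈ ({c, x, y} : Set V) <;> aesop] at this
    exact this.preconnected
  · obtain rfl | rfl : w₀ = u ∨ w₀ = v := by
      by_contra! hne
      exact hc ⟨w₀, ⟨hw₀, by simp [hne.1, hne.2]⟩, hcw₀⟩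
    · exact absurd (h.exists_adj_mem_diff_pair hG hT hu hv huv hcw₀ hR') hc
    · rw [Set.pair_comm u w₀] at hR' hc
      exact absurd (h.exists_adj_mem_diff_pair hG hT hv hu huv.symm hcw₀ hR') hc

end IsCherry
end SimpleGraph

theorem exists_adj_preconnected_induce_compl_pair [Finite V] (hG : G.Connected)
    (h2 : 2 ≤ Nat.card V) (hT : (Nat.card V + 1) / 2 ≤ treeCoverNumber G) :
    ∃ u v, G.Adj u v ∧ (G.induce ({u, v}ᶜ : Set V)).Preconnected := by
  induction hn : Nat.card V using Nat.strong_induction_on generalizing V with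
  | _ n ih =>
  have : Nontrivial V := Finite.one_lt_card_iff_nontrivial.mp (by omega)
  obtain ⟨c, L, hLne, hcL, hL, hR⟩ := hG.exists_isIndepSet_preconnected_induce_compl
  have hQ := treeCoverNumber_le_of_isTree_induce_of_preconnected
    (isTree_induce_insert_of_isIndepSet hcL hL) hR
  have hcard := Set.ncard_add_ncard_compl (insert c L)
  rw [Set.ncard_insert_of_notMem fun hc ↦ (hcL c hc).ne rfl] at hcard
  have := (Set.ncard_pos).mpr hLne
  obtain hL1 | hL2 : L.ncard = 1 ∨ L.ncard = 2 := by omega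
  · obtain ⟨x, rfl⟩ := Set.ncard_eq_one.mp hL1
    exact ⟨c, x, hcL x rfl, hR⟩
  obtain ⟨x, y, hxy, rfl⟩ := Set.ncard_eq_two.mp hL2
  have hcx := hcL x (by simp)
  have hcy := hcL y (by simp)
  by_cases hx : ∃ w ∈ ({c, x, y} : Set V)ᶜ, G.Adj x w
  · obtain ⟨w, hw, hxw⟩ := hx
    exact ⟨c, y, hcy, preconnected_induce_compl_pair_of_adj hR hcx.ne hxy hw hxw⟩
  by_cases hy : ∃ w ∈ ({c, x, y} : Set V)ᶜ, G.Adj y w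
  · obtain ⟨w, hw, hyw⟩ := hy
    rw [Set.pair_comm] at hR hw
    exact ⟨c, x, hcx, preconnected_induce_compl_pair_of_adj hR hcy.ne hxy.symm hw hyw⟩
  push Not at hx hy
  have hcherry := IsCherry.of_forall_not_adj hcx hcy hxy (hL (by simp) (by simp) hxy) hx hy
  refine hcherry.exists_adj_preconnected_induce_compl_pair hG hT hR fun hR2 ↦ ?_
  set R := ({c, x, y} : Set V)ᶜ
  have hRconn : (G.induce R).Connected := (connected_iff _).mpr
    ⟨hR, (Set.nonempty_of_ncard_ne_zero (by omega : R.ncard ≠ 0)).to_subtype⟩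
  have hTR : (Nat.card R + 1) / 2 ≤ treeCoverNumber (G.induce R) := by
    have : treeCoverNumber G ≤ treeCoverNumber (G.induce R) + 1 :=
      treeCoverNumber_le_add_one_of_isTree_induce hcherry.isTree_induce
    rw [Nat.card_coe_set_eq]
    omega
  obtain ⟨u, v, huv, hpre⟩ := ih (Nat.card R) (by rw [Nat.card_coe_set_eq]; omega) hRconn
    (by rwa [Nat.card_coe_set_eq]) hTR rfl
  refine ⟨u, u.2, v, v.2, huv, ?_⟩
  have := (induceInduceIso G R {u, v}ᶜ).preconnected_iff.mp hpre
  rwa [Set.image_val_compl, Set.image_pair] at this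

theorem stmt_7 {V : Type} [Fintype V] (G : SimpleGraph V) (hG : G.Connected)
    (hn : 3 ≤ Fintype.card V) (hT : treeCoverNumber G = (Fintype.card V + 1) / 2) :
    ∃ u v : V, G.Adj u v ∧ (G.induce ({u, v}ᶜ : Set V)).Connected ∧
      treeCoverNumber (G.induce ({u, v}ᶜ : Set V)) = (Fintype.card V - 2 + 1) / 2 := by
  rw [← Nat.card_eq_fintype_card] at hn hT ⊢
  obtain ⟨u, v, huv, hpre⟩ := exists_adj_preconnected_induce_compl_pair hG (by omega) hT.ge
  have hcard := Set.ncard_add_ncard_compl ({u, v} : Set V)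
  rw [Set.ncard_pair huv.ne] at hcard
  have hconn : (G.induce ({u, v}ᶜ : Set V)).Connected := (connected_iff _).mpr
    ⟨hpre, (Set.nonempty_of_ncard_ne_zero
      (by omega : ({u, v}ᶜ : Set V).ncard ≠ 0)).to_subtype⟩
  have hupper := treeCoverNumber_le_of_preconnected hpre
  have hlower := treeCoverNumber_le_add_one_of_isTree_induce
    (isTree_induce_insert_of_isIndepSet (by simpa using huv) (Set.pairwise_singleton v _))
  rw [Nat.card_coe_set_eq] at hupper
  exact ⟨u, v, huv, hconn, by omega⟩
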